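/- For every prime p with p ∉ {2,3}, there is an isomorphism of ℤ_p-algebras ℤ_p[A₄] ≅ ℤ_p × ℤ_p[X]/(X²+X+1) × Mat₃(ℤ_p). -/

import Mathlib

open Polynomial

/-- `A₄`, the alternating group on 4 letters. -/
abbrev A4 : Type := alternatingGroup (Fin 4)

/-!
`A₄` acts on `R` trivially, on `R[ω] = R[X]/(X² + X + 1)` through `A₄ / V₄ ≅ ℤ/3`, and on the
sum-zero vectors of `R⁴`; in the basis of `±1`-vectors attached to the three pairings of
`{0, 1, 2, 3}` the last action is by signed permutation matrices, the Klein group acting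
diagonally and the 3-cycle `(1 2 3)` permuting the basis cyclically. If `2` and `3` are units,
the image of `R[A₄]` contains the central idempotents (average over `V₄`, then over `⟨(1 2 3)⟩`),
the generator `ω` of `R[ω]`, the diagonal matrix units `(1 + d)/2` (`d ∈ V₄`) and hence all matrix
units, so `R[A₄] → R × R[ω] × M₃(R)` is onto. Both sides are free of rank `12`, and a surjection
between free modules of the same finite rank is bijective.
-/

open Equiv

theorem Subalgebra.eq_top_of_prod {R A B : Type*} [CommRing R] [Ring A] [Ring B]
    [Algebra R A] [Algebra R B] (S : Subalgebra R (A × B)) (h10 : ((1, 0) : A × B) ∈ S)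
    (hA : S.map (AlgHom.fst R A B) = ⊤) (hB : S.map (AlgHom.snd R A B) = ⊤) : S = ⊤ := by
  refine eq_top_iff.2 fun ⟨a, b⟩ _ => ?_
  obtain ⟨s, hs, rfl⟩ := Subalgebra.mem_map.1 (hA ▸ Algebra.mem_top : a ∈ S.map _)
  obtain ⟨t, ht, rfl⟩ := Subalgebra.mem_map.1 (hB ▸ Algebra.mem_top : b ∈ S.map _)
  have key : (1, 0) * s + (1 - (1, 0)) * t = (s.1, t.2) := by ext <;> simp
  exact key ▸ S.add_mem (S.mul_mem h10 hs) (S.mul_mem (S.sub_mem S.one_mem h10) ht)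

theorem Subalgebra.smul_mem_iff_of_isUnit {R A : Type*} [CommSemiring R] [Semiring A]
    [Algebra R A] (S : Subalgebra R A) {r : R} (hr : IsUnit r) {x : A} : r • x ∈ S ↔ x ∈ S :=
  Submodule.smul_mem_iff_of_isUnit (Subalgebra.toSubmodule S) hr

theorem AdjoinRoot.subalgebra_eq_top_of_root_mem {R : Type*} [CommRing R] {f : R[X]}
    (S : Subalgebra R (AdjoinRoot f)) (h : root f ∈ S) : S = ⊤ :=
  eq_top_iff.2 <| adjoinRoot_eq_top (f := f) ▸ Algebra.adjoin_le (Set.singleton_subset_iff.2 h)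

theorem Matrix.subalgebra_eq_top_of_single_mem {R n : Type*} [CommSemiring R] [Fintype n]
    [DecidableEq n] (S : Subalgebra R (Matrix n n R)) (h : ∀ i j, single i j 1 ∈ S) : S = ⊤ := by
  refine eq_top_iff.2 fun M _ => ?_
  rw [matrix_eq_sum_single M]
  refine S.sum_mem fun i _ => S.sum_mem fun j _ => ?_
  simpa [smul_single] using S.smul_mem (h i j) (M i j)

def ZMod.powMonoidHom {M : Type*} [Monoid M] {n : ℕ} [NeZero n] {ω : M} (hω : ω ^ n = 1) :
    Multiplicative (ZMod n) →* M where
  toFun k := ω ^ k.toAdd.val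
  map_one' := by simp
  map_mul' a b := by
    simp only [toAdd_mul, ZMod.val_add, ← pow_add]
    exact (pow_eq_pow_mod _ hω).symm

theorem PadicInt.isUnit_natCast {p : ℕ} [Fact p.Prime] {n : ℕ} (h : p.Coprime n) :
    IsUnit (n : ℤ_[p]) :=
  isUnit_iff.2 (norm_natCast_eq_one_iff.2 h)

section Eisenstein

variable (R : Type*) [CommRing R]

abbrev Eisenstein : Type _ := AdjoinRoot (X ^ 2 + X + 1 : R[X])

theorem monic_X_sq_add_X_add_one : (X ^ 2 + X + 1 : R[X]).Monic := by monicity!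

noncomputable def Eisenstein.powerBasis : PowerBasis R (Eisenstein R) :=
  AdjoinRoot.powerBasis' (monic_X_sq_add_X_add_one R)

instance : Module.Free R (Eisenstein R) := .of_basis (Eisenstein.powerBasis R).basis

instance : Module.Finite R (Eisenstein R) := .of_basis (Eisenstein.powerBasis R).basis

theorem Eisenstein.finrank [Nontrivial R] : Module.finrank R (Eisenstein R) = 2 := by
  rw [(powerBasis R).finrank, powerBasis, AdjoinRoot.powerBasis'_dim]
  compute_degree!

variable {R}

theorem Eisenstein.root_sq_add_root_add_one :
    AdjoinRoot.root (X ^ 2 + X + 1 : R[X]) ^ 2 + AdjoinRoot.root _ + 1 = 0 := by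
  have h := AdjoinRoot.eval₂_root (X ^ 2 + X + 1 : R[X])
  rwa [eval₂_add, eval₂_add, eval₂_pow, eval₂_X, eval₂_one] at h

theorem Eisenstein.root_pow_three : AdjoinRoot.root (X ^ 2 + X + 1 : R[X]) ^ 3 = 1 := by
  linear_combination
    (AdjoinRoot.root (X ^ 2 + X + 1 : R[X]) - 1) * root_sq_add_root_add_one (R := R)

end Eisenstein

namespace A4

def doubleTransposition (i : Fin 3) : A4 :=
  ⟨![swap 0 1 * swap 2 3, swap 0 2 * swap 1 3, swap 0 3 * swap 1 2] i,
    Perm.mem_alternatingGroup.2 (by revert i; decide)⟩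

/-- The 3-cycle `(1 2 3)`. -/
def threeCycle : A4 := ⟨swap 1 2 * swap 2 3, Perm.mem_alternatingGroup.2 (by decide)⟩

def kleinFour : Finset A4 := insert 1 (Finset.univ.image doubleTransposition)

def kleinCosetIndex (σ : A4) : ZMod 3 :=
  if σ ∈ kleinFour then 0 else if σ * threeCycle⁻¹ ∈ kleinFour then 1 else 2

def cubeRootCharacter : A4 →* Multiplicative (ZMod 3) where
  toFun σ := .ofAdd (kleinCosetIndex σ)
  map_one' := by decide
  map_mul' := by decide

/-- The sign of the block containing `k` in the pairing `{{0, i + 1}, …}` of `Fin 4`. -/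
def pairingSign (i : Fin 3) (k : Fin 4) : ℤ := if k = 0 ∨ k = i.succ then 1 else -1

/-- The action of `A₄` on the sum-zero vectors of `ℤ⁴` in the orthogonal basis
`∑ k, pairingSign i k • e k`, whose vectors have square norm `4`. -/
def signedRep : A4 →* Matrix (Fin 3) (Fin 3) ℤ where
  toFun σ := Matrix.of fun i j => (∑ k, pairingSign i ((σ : Perm (Fin 4)) k) * pairingSign j k) / 4
  map_one' := by decide
  map_mul' := by decide

theorem cubeRootCharacter_doubleTransposition (i : Fin 3) :
    cubeRootCharacter (doubleTransposition i) = 1 := by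
  revert i; decide

theorem cubeRootCharacter_threeCycle : cubeRootCharacter threeCycle = .ofAdd 1 := by decide

theorem one_add_sum_signedRep_doubleTransposition :
    1 + ∑ i, signedRep (doubleTransposition i) = 0 := by
  decide

theorem one_add_signedRep_doubleTransposition (i : Fin 3) :
    1 + signedRep (doubleTransposition i) = Matrix.single i i 2 := by
  revert i; decide

theorem single_mul_signedRep_threeCycle_pow (i j : Fin 3) :
    Matrix.single i i 1 * signedRep threeCycle ^ (i - j).val = Matrix.single i j 1 := by
  revert i j; decide

section Decomposition

variable (R : Type*) [CommRing R]

abbrev Target : Type _ := R × Eisenstein R × Matrix (Fin 3) (Fin 3) R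

theorem finrank_target [Nontrivial R] : Module.finrank R (Target R) = 12 := by
  simp [Module.finrank_prod, Eisenstein.finrank, Module.finrank_matrix]

noncomputable def matrixRep : A4 →* Matrix (Fin 3) (Fin 3) R :=
  (Int.castRingHom R).mapMatrix.toMonoidHom.comp signedRep

noncomputable def rep : A4 →* Target R :=
  (1 : A4 →* R).prod
    (((ZMod.powMonoidHom Eisenstein.root_pow_three).comp cubeRootCharacter).prod (matrixRep R))

noncomputable def toTarget : MonoidAlgebra R A4 →ₐ[R] Target R :=
  MonoidAlgebra.lift R (Target R) A4 (rep R)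

theorem rep_mem_range (g : A4) : rep R g ∈ (toTarget R).range :=
  ⟨MonoidAlgebra.single g 1, by simp [toTarget]⟩

theorem rep_doubleTransposition (i : Fin 3) :
    rep R (doubleTransposition i) = (1, 1, matrixRep R (doubleTransposition i)) := by
  simp [rep, cubeRootCharacter_doubleTransposition, ZMod.powMonoidHom]

theorem rep_threeCycle :
    rep R threeCycle = (1, AdjoinRoot.root _, matrixRep R threeCycle) := by
  simp [rep, cubeRootCharacter_threeCycle, ZMod.powMonoidHom,
    show (1 : ZMod 3).val = 1 from rfl]

theorem one_add_sum_matrixRep_doubleTransposition :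
    1 + ∑ i, matrixRep R (doubleTransposition i) = 0 := by
  have h := congrArg (Int.castRingHom R).mapMatrix one_add_sum_signedRep_doubleTransposition
  rwa [map_add, map_one, map_sum, map_zero] at h

theorem one_add_matrixRep_doubleTransposition (i : Fin 3) :
    1 + matrixRep R (doubleTransposition i) = (2 : R) • Matrix.single i i 1 := by
  have h := congrArg (Int.castRingHom R).mapMatrix (one_add_signedRep_doubleTransposition i)
  simp only [map_add, map_one, RingHom.mapMatrix_apply, Matrix.map_single] at h
  simpa [matrixRep, Matrix.smul_single] using h

theorem single_mul_matrixRep_threeCycle_pow (i j : Fin 3) :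
    Matrix.single i i 1 * matrixRep R threeCycle ^ (i - j).val = Matrix.single i j 1 := by
  have h := congrArg (Int.castRingHom R).mapMatrix (single_mul_signedRep_threeCycle_pow i j)
  simp only [map_mul, map_pow, RingHom.mapMatrix_apply, Matrix.map_single] at h
  simpa [matrixRep] using h

variable {R}

theorem one_one_zero_mem_range (h2 : IsUnit (2 : R)) :
    ((1, 1, 0) : Target R) ∈ (toTarget R).range := by
  have h4 : IsUnit (4 : R) := by
    convert h2.mul h2 using 1
    norm_num
  have hsum : rep R 1 + ∑ i, rep R (doubleTransposition i) = (4 : R) • ((1, 1, 0) : Target R) := by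
    have hM := one_add_sum_matrixRep_doubleTransposition R
    simp only [Fin.sum_univ_three, rep_doubleTransposition, map_one, Prod.mk_add_mk, Prod.smul_mk,
      smul_zero] at hM ⊢
    refine Prod.ext (by norm_num) (Prod.ext ?_ hM)
    norm_num [Algebra.smul_def, map_ofNat]
  rw [← Subalgebra.smul_mem_iff_of_isUnit _ h4, ← hsum]
  exact Subalgebra.add_mem _ (rep_mem_range R 1)
    (Subalgebra.sum_mem _ fun i _ => rep_mem_range R (doubleTransposition i))

theorem one_zero_zero_mem_range (h2 : IsUnit (2 : R)) (h3 : IsUnit (3 : R)) :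
    ((1, 0, 0) : Target R) ∈ (toTarget R).range := by
  set e : Target R := (1, 1, 0)
  have hsum : e + e * rep R threeCycle + e * rep R threeCycle ^ 2 =
      (3 : R) • ((1, 0, 0) : Target R) := by
    simp only [e, rep_threeCycle, Prod.mk_mul_mk, Prod.pow_mk, Prod.mk_add_mk, Prod.smul_mk,
      smul_zero]
    refine Prod.ext (by norm_num) (Prod.ext ?_ (by simp))
    linear_combination Eisenstein.root_sq_add_root_add_one (R := R)
  have he := one_one_zero_mem_range h2
  have hc := rep_mem_range R threeCycle
  rw [← Subalgebra.smul_mem_iff_of_isUnit _ h3, ← hsum]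
  exact Subalgebra.add_mem _ (Subalgebra.add_mem _ he (Subalgebra.mul_mem _ he hc))
    (Subalgebra.mul_mem _ he (Subalgebra.pow_mem _ hc 2))

theorem eq_top_of_matrixRep_mem (h2 : IsUnit (2 : R))
    {S : Subalgebra R (Matrix (Fin 3) (Fin 3) R)} (hS : ∀ g, matrixRep R g ∈ S) : S = ⊤ := by
  have hdiag (i : Fin 3) : Matrix.single i i 1 ∈ S := by
    rw [← S.smul_mem_iff_of_isUnit h2, ← one_add_matrixRep_doubleTransposition]
    exact S.add_mem S.one_mem (hS _)
  refine Matrix.subalgebra_eq_top_of_single_mem S fun i j => ?_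
  rw [← single_mul_matrixRep_threeCycle_pow]
  exact S.mul_mem (hdiag i) (S.pow_mem (hS threeCycle) _)

theorem toTarget_surjective (h2 : IsUnit (2 : R)) (h3 : IsUnit (3 : R)) :
    Function.Surjective (toTarget R) := by
  set S := (toTarget R).range
  have hS (g : A4) : (rep R g).2 ∈ S.map (AlgHom.snd R _ _) := ⟨_, rep_mem_range R g, rfl⟩
  rw [← AlgHom.range_eq_top]
  refine Subalgebra.eq_top_of_prod S (one_zero_zero_mem_range h2 h3) (Subsingleton.elim _ _) ?_
  refine Subalgebra.eq_top_of_prod _ ⟨_, one_one_zero_mem_range h2, rfl⟩ ?_ ?_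
  · refine AdjoinRoot.subalgebra_eq_top_of_root_mem _ ⟨_, hS threeCycle, ?_⟩
    simp [rep_threeCycle]
  · exact eq_top_of_matrixRep_mem h2 fun g => ⟨_, hS g, rfl⟩

theorem toTarget_bijective (h2 : IsUnit (2 : R)) (h3 : IsUnit (3 : R)) :
    Function.Bijective (toTarget R) := by
  refine OrzechProperty.bijective_of_surjective_of_finrank_le (toTarget R).toLinearMap
    (toTarget_surjective h2 h3) ?_
  rcases subsingleton_or_nontrivial R with hR | hR
  · have := Module.subsingleton R (MonoidAlgebra R A4)
    simp
  · rw [finrank_target, Module.finrank_eq_card_basis (MonoidAlgebra.basis A4 R)]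
    rfl

noncomputable def monoidAlgebraEquiv (h2 : IsUnit (2 : R)) (h3 : IsUnit (3 : R)) :
    MonoidAlgebra R A4 ≃ₐ[R] Target R :=
  AlgEquiv.ofBijective (toTarget R) (toTarget_bijective h2 h3)

end Decomposition

end A4

/-- For every prime `p ∉ {2,3}` there is an isomorphism of `ℤ_p`-algebras
`ℤ_p[A₄] ≅ ℤ_p × ℤ_p[X]/(X²+X+1) × Mat₃(ℤ_p)`. -/
theorem padic_group_algebra_A4_iso (p : ℕ) [Fact p.Prime] (hp2 : p ≠ 2) (hp3 : p ≠ 3) :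
    Nonempty (MonoidAlgebra ℤ_[p] A4 ≃ₐ[ℤ_[p]]
      ℤ_[p] × (Polynomial ℤ_[p] ⧸ Ideal.span {(X : Polynomial ℤ_[p]) ^ 2 + X + 1}) ×
        Matrix (Fin 3) (Fin 3) ℤ_[p]) := by
  have hp : p.Prime := Fact.out
  have h2 : IsUnit (2 : ℤ_[p]) := by
    simpa using PadicInt.isUnit_natCast ((Nat.coprime_primes hp Nat.prime_two).2 hp2)
  have h3 : IsUnit (3 : ℤ_[p]) := by
    simpa using PadicInt.isUnit_natCast ((Nat.coprime_primes hp Nat.prime_three).2 hp3)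
  exact ⟨A4.monoidAlgebraEquiv h2 h3⟩
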